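/- Consider the 2n-player, 2-action game consisting of n disjoint pairs of players, each pair playing matching pennies (the actions of a pair do not influence the payoffs of other pairs), and let x be the Nash equilibrium in which every player plays (1/2, 1/2). If the number of samples satisfies 1 ≤ k ≤ (log₂ n)/2, then the probability (over k i.i.d. samples from x) that the product empirical distribution of play is a 1/4-coarse correlated equilibrium is at most (1 − 1/√n)^{2n}. In particular: (a) each player's empirical distribution is a pure strategy with probability 2·(1/2)^k ≥ 1/√n; (b) if any player's empirical distribution is pure, the product empirical distribution of play is not a 1/4-coarse correlated equilibrium. -/

import Mathlib

/-!
For each player, the `k` sampled actions form a uniform word in `{1,2}^k`, independent across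
players, and that player's empirical distribution is pure exactly when the word is constant, which
has probability `2 · 2^{-k} ≥ 1/√n`.

A pure player rules out a `1/4`-CCE: if the matcher of a pair always plays `b` and `y` is the
empirical distribution of the mismatcher, then deviating to `1 - b` gains `y_b` for the mismatcher
and `y_{1-b} - y_b` for the matcher, which cannot both be at most `1/4`; a pure mismatcher is
symmetric. So a `1/4`-CCE needs all `2n` words non-constant, of probability `(1 - 2 · 2^{-k})^{2n}`.
-/

open Finset

open scoped Classical

noncomputable section

/-- Probability of the pure action profile `a` under the product distribution `x`
(players indexed by an arbitrary finite type `P`). -/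
def prodProb {P : Type*} [Fintype P] {m : ℕ} (x : P → Fin m → ℝ) (a : P → Fin m) : ℝ :=
  ∏ p, x p (a p)

/-- Probability of the event `E` over `k` i.i.d. samples from the product
distribution `x`. -/
def PrProd {P : Type*} [Fintype P] {m : ℕ} (k : ℕ) (x : P → Fin m → ℝ)
    (E : (Fin k → P → Fin m) → Prop) : ℝ :=
  ∑ a : Fin k → P → Fin m, if E a then ∏ t, prodProb x (a t) else 0

/-- Empirical distribution of player `p` from `k` sampled action profiles. -/
def emp {P : Type*} {m : ℕ} (k : ℕ) (a : Fin k → P → Fin m) (p : P) : Fin m → ℝ :=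
  fun b => ((univ.filter fun t => a t p = b).card : ℝ) / k

/-- `x ∈ Δ(A)` is an `ε`-coarse correlated equilibrium of the game `u`. -/
def IsCCE {P : Type*} [Fintype P] [DecidableEq P] {m : ℕ}
    (u : P → (P → Fin m) → ℝ) (x : (P → Fin m) → ℝ) (ε : ℝ) : Prop :=
  ∀ (p : P) (j : Fin m),
    ∑ a : P → Fin m, x a * (u p (Function.update a p j) - u p a) ≤ ε

/-- The `2n`-player, `2`-action game made of `n` disjoint matching-pennies pairs:
player `(i, false)` gets `1` iff the two members of pair `i` play the same action,
and player `(i, true)` gets `1` iff they play different actions. -/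
def mpGame (n : ℕ) : (Fin n × Bool) → ((Fin n × Bool) → Fin 2) → ℝ :=
  fun p a =>
    if p.2 = false then (if a (p.1, false) = a (p.1, true) then 1 else 0)
    else (if a (p.1, false) = a (p.1, true) then 0 else 1)

section ProductDistribution

variable {P : Type*} [Fintype P] {m : ℕ}

lemma sum_prodProb_mul_ite_mul_ite (w : P → Fin m → ℝ) (hw : ∀ r, ∑ b, w r b = 1) {p q : P}
    (hpq : p ≠ q) (b b' : Fin m) :
    ∑ c : P → Fin m, prodProb w c * (if c p = b then 1 else 0) * (if c q = b' then 1 else 0)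
      = w p b * w q b' := by
  have hsummand : ∀ c : P → Fin m,
      prodProb w c * (if c p = b then 1 else 0) * (if c q = b' then 1 else 0)
        = ∏ r, w r (c r) * ((if r = p then (if c r = b then 1 else 0) else 1)
            * (if r = q then (if c r = b' then 1 else 0) else 1)) := by
    intro c
    rw [prod_mul_distrib, prod_mul_distrib, Fintype.prod_ite_eq', Fintype.prod_ite_eq', mul_assoc]
    rfl
  have hfactor : ∀ r, ∑ β, w r β * ((if r = p then (if β = b then 1 else 0) else 1)
      * (if r = q then (if β = b' then 1 else 0) else 1))
        = (if r = p then w p b else 1) * (if r = q then w q b' else 1) := by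
    intro r
    by_cases hp : r = p
    · subst hp; simp [hpq]
    by_cases hq : r = q
    · subst hq; simp [hp]
    simp [hp, hq, hw]
  rw [sum_congr rfl fun c _ => hsummand c, ← Fintype.prod_sum (fun r β => w r β *
    ((if r = p then (if β = b then 1 else 0) else 1) * (if r = q then (if β = b' then 1 else 0) else 1)))]
  simp_rw [hfactor, prod_mul_distrib, Fintype.prod_ite_eq']

lemma sum_prodProb_mul_apply_apply (w : P → Fin m → ℝ) (hw : ∀ r, ∑ b, w r b = 1) {p q : P}
    (hpq : p ≠ q) (g : Fin m → Fin m → ℝ) :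
    ∑ c : P → Fin m, prodProb w c * g (c p) (c q) = ∑ b, ∑ b', w p b * w q b' * g b b' := by
  have hexpand : ∀ c : P → Fin m, g (c p) (c q)
      = ∑ b, ∑ b', ((if c p = b then 1 else 0) * (if c q = b' then 1 else 0)) * g b b' := by
    intro c
    simp [ite_mul]
  simp_rw [hexpand, mul_sum, ← mul_assoc]
  rw [sum_comm]
  refine sum_congr rfl fun b _ => ?_
  rw [sum_comm]
  refine sum_congr rfl fun b' _ => ?_
  rw [← sum_mul, sum_prodProb_mul_ite_mul_ite w hw hpq]

end ProductDistribution

section Sampling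

variable {P : Type*} [Fintype P] {m : ℕ}

lemma PrProd_congr (k : ℕ) (x : P → Fin m → ℝ) {E E' : (Fin k → P → Fin m) → Prop}
    (h : ∀ a, E a ↔ E' a) : PrProd k x E = PrProd k x E' :=
  sum_congr rfl fun a _ => if_congr (h a) rfl rfl

lemma PrProd_mono (k : ℕ) {x : P → Fin m → ℝ} (hx : ∀ p b, 0 ≤ x p b)
    {E E' : (Fin k → P → Fin m) → Prop} (h : ∀ a, E a → E' a) : PrProd k x E ≤ PrProd k x E' := by
  refine sum_le_sum fun a _ => ?_
  have hprob : 0 ≤ ∏ t, prodProb x (a t) := prod_nonneg fun t _ => prod_nonneg fun p _ => hx p _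
  split_ifs with hE hE' <;> first | rfl | exact hprob | exact absurd (h a hE) hE'

lemma PrProd_forall_eq_prod (k : ℕ) (x : P → Fin m → ℝ) (F : P → (Fin k → Fin m) → Prop) :
    PrProd k x (fun a => ∀ p, F p (fun t => a t p))
      = ∏ p, ∑ s : Fin k → Fin m, if F p s then ∏ t, x p (s t) else 0 := by
  rw [Fintype.prod_sum]
  refine Fintype.sum_equiv (Equiv.piComm _) _ _ fun a => ?_
  change _ = ∏ p, if F p (fun t => a t p) then ∏ t, x p (a t p) else 0
  by_cases h : ∀ p, F p (fun t => a t p)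
  · rw [if_pos h, prod_congr rfl fun p _ => if_pos (h p)]
    exact prod_comm
  · rw [if_neg h]
    obtain ⟨p, hp⟩ := not_forall.mp h
    exact (prod_eq_zero (mem_univ p) (if_neg hp)).symm

lemma PrProd_player (k : ℕ) (x : P → Fin m → ℝ) (hx : ∀ p, ∑ b, x p b = 1) (p : P)
    (F : (Fin k → Fin m) → Prop) :
    PrProd k x (fun a => F (fun t => a t p)) = ∑ s, if F s then ∏ t, x p (s t) else 0 := by
  rw [PrProd_congr k x (E' := fun a => ∀ p', p' = p → F (fun t => a t p'))
    (fun a => ⟨fun h p' hp' => hp' ▸ h, fun h => h p rfl⟩),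
    PrProd_forall_eq_prod k x (fun p' s => p' = p → F s), prod_eq_single p (fun p' _ hp' => ?_) (by simp)]
  · simp
  · simp only [hp', false_implies, if_true]
    rw [← Fintype.prod_sum (fun _ b => x p' b)]
    simp [hx]

end Sampling

section Empirical

variable {P : Type*} {m k : ℕ}

lemma emp_nonneg (a : Fin k → P → Fin m) (p : P) (b : Fin m) : 0 ≤ emp k a p b := by
  unfold emp
  positivity

lemma sum_emp (hk : k ≠ 0) (a : Fin k → P → Fin m) (p : P) : ∑ b, emp k a p b = 1 := by
  simp only [emp, ← sum_div, ← Nat.cast_sum]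
  rw [← card_eq_sum_card_fiberwise fun t _ => mem_univ (a t p), card_univ, Fintype.card_fin,
    div_self (by exact_mod_cast hk)]

lemma emp_eq_one_iff (hk : k ≠ 0) (a : Fin k → P → Fin m) (p : P) (b : Fin m) :
    emp k a p b = 1 ↔ ∀ t, a t p = b := by
  rw [emp, div_eq_one_iff_eq (by exact_mod_cast hk), Nat.cast_inj]
  simpa using card_filter_eq_iff (s := univ) (p := fun t => a t p = b)

lemma exists_emp_eq_one_iff (hk : k ≠ 0) (a : Fin k → P → Fin m) (p : P) :
    (∃ b, emp k a p b = 1) ↔ ∃ b, (fun t => a t p) = Function.const _ b := by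
  simp only [emp_eq_one_iff hk, funext_iff, Function.const_apply]

end Empirical

lemma sum_ite_exists_eq_const (k m : ℕ) (hk : k ≠ 0) (c : ℝ) :
    ∑ s : Fin k → Fin m, (if ∃ b, s = Function.const _ b then c else 0) = m * c := by
  have : NeZero k := ⟨hk⟩
  rw [← sum_filter, show univ.filter (fun s : Fin k → Fin m => ∃ b, s = Function.const _ b)
      = univ.image (Function.const _) by ext; simp [eq_comm],
    sum_const, card_image_of_injective _ Function.const_injective, card_univ, Fintype.card_fin,
    nsmul_eq_mul]

lemma sum_ite_not_exists_eq_const (k m : ℕ) (hk : k ≠ 0) (c : ℝ) :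
    ∑ s : Fin k → Fin m, (if ¬∃ b, s = Function.const _ b then c else 0) = ((m : ℝ) ^ k - m) * c := by
  have hsplit : ∀ s : Fin k → Fin m, (if ¬∃ b, s = Function.const _ b then c else 0)
      = c - if ∃ b, s = Function.const _ b then c else 0 := fun s => by split_ifs <;> simp_all
  simp only [hsplit, sum_sub_distrib, sum_ite_exists_eq_const k m hk, sum_const, card_univ,
    Fintype.card_fun, Fintype.card_fin, nsmul_eq_mul]
  push_cast
  ring

lemma not_isCCE_mpGame_of_eq_one {n : ℕ} (w : Fin n × Bool → Fin 2 → ℝ)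
    (hw0 : ∀ r b, 0 ≤ w r b) (hw : ∀ r, ∑ b, w r b = 1) {p : Fin n × Bool} {b : Fin 2}
    (hpure : w p b = 1) : ¬ IsCCE (mpGame n) (prodProb w) (1 / 4) := by
  intro hCCE
  obtain ⟨i, role⟩ := p
  have hpair : ((i, false) : Fin n × Bool) ≠ (i, true) := by simp
  have hmatcher : ∀ j, ∑ β, ∑ β', w (i, false) β * w (i, true) β' *
      ((if j = β' then 1 else 0) - if β = β' then 1 else 0) ≤ 1 / 4 := fun j => by
    rw [← sum_prodProb_mul_apply_apply w hw hpair
      (fun β β' => (if j = β' then 1 else 0) - if β = β' then 1 else 0)]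
    convert hCCE (i, false) j using 3 with c
    simp [mpGame, Function.update]
  have hmismatcher : ∀ j, ∑ β, ∑ β', w (i, false) β * w (i, true) β' *
      ((if β = j then 0 else 1) - if β = β' then 0 else 1) ≤ 1 / 4 := fun j => by
    rw [← sum_prodProb_mul_apply_apply w hw hpair
      (fun β β' => (if β = j then 0 else 1) - if β = β' then 0 else 1)]
    convert hCCE (i, true) j using 3 with c
    simp [mpGame, Function.update]
  have h0 := hmatcher 0
  have h1 := hmatcher 1
  have h2 := hmismatcher 0
  have h3 := hmismatcher 1
  have hx := hw (i, false)
  have hy := hw (i, true)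
  simp only [Fin.sum_univ_two] at h0 h1 h2 h3 hx hy
  norm_num at h0 h1 h2 h3
  have := hw0 (i, false) 0
  have := hw0 (i, false) 1
  have := hw0 (i, true) 0
  have := hw0 (i, true) 1
  cases role <;> fin_cases b <;> simp at hpure <;> nlinarith

section UniformSampling

variable {P : Type*} [Fintype P] {k : ℕ}

lemma PrProd_half_emp_pure (hk : k ≠ 0) (p : P) :
    PrProd k (fun (_ : P) (_ : Fin 2) => (1 : ℝ) / 2) (fun a => ∃ b, emp k a p b = 1)
      = 2 * (1 / 2) ^ k := by
  rw [PrProd_congr k _ (fun a => exists_emp_eq_one_iff hk a p),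
    PrProd_player k _ (fun _ => by norm_num) p (fun s => ∃ b, s = Function.const _ b)]
  simp only [prod_const, card_univ, Fintype.card_fin]
  rw [sum_ite_exists_eq_const k 2 hk]
  norm_num

lemma PrProd_half_forall_not_emp_pure (hk : k ≠ 0) :
    PrProd k (fun (_ : P) (_ : Fin 2) => (1 : ℝ) / 2) (fun a => ∀ p, ¬∃ b, emp k a p b = 1)
      = (1 - 2 * (1 / 2) ^ k) ^ Fintype.card P := by
  rw [PrProd_congr k _ (fun a => forall_congr' fun p => not_congr (exists_emp_eq_one_iff hk a p)),
    PrProd_forall_eq_prod k _ (fun _ s => ¬∃ b, s = Function.const _ b)]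
  simp only [prod_const, card_univ, Fintype.card_fin]
  rw [sum_ite_not_exists_eq_const k 2 hk, div_pow, one_pow]
  field_simp
  norm_num

end UniformSampling

lemma two_pow_le_sqrt {x : ℝ} (hx : 0 < x) {k : ℕ} (hk : (k : ℝ) ≤ Real.logb 2 x / 2) :
    (2 : ℝ) ^ k ≤ √x := by
  calc (2 : ℝ) ^ k = 2 ^ (k : ℝ) := (Real.rpow_natCast 2 k).symm
    _ ≤ 2 ^ (Real.logb 2 x / 2) := Real.rpow_le_rpow_of_exponent_le (by norm_num) hk
    _ = √x := by
      rw [div_eq_mul_inv, Real.rpow_mul (by norm_num), Real.rpow_logb (by norm_num) (by norm_num) hx,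
        Real.sqrt_eq_rpow, one_div]

/-- In the `2n`-player game of `n` disjoint matching-pennies pairs,
let `x` be the Nash equilibrium where every player plays `(1/2, 1/2)`.  If
`1 ≤ k ≤ (log₂ n)/2`, then the probability over `k` i.i.d. samples from `x` that the
product empirical distribution of play is a `1/4`-coarse correlated equilibrium is at
most `(1 − 1/√n)^{2n}`.  Moreover: (a) each player's empirical distribution is a pure
strategy with probability `2·(1/2)^k ≥ 1/√n`; (b) if some player's empirical
distribution is pure, the product empirical distribution of play is not a
`1/4`-coarse correlated equilibrium. -/
theorem stmt14 (n : ℕ) (hn : 0 < n) (k : ℕ) (hk1 : 1 ≤ k)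
    (hk2 : (k : ℝ) ≤ Real.logb 2 n / 2) :
    PrProd k (fun (_ : Fin n × Bool) (_ : Fin 2) => (1 : ℝ) / 2)
        (fun a => IsCCE (mpGame n) (prodProb (emp k a)) (1 / 4))
      ≤ (1 - 1 / Real.sqrt n) ^ (2 * n)
    ∧ (∀ p : Fin n × Bool,
        PrProd k (fun (_ : Fin n × Bool) (_ : Fin 2) => (1 : ℝ) / 2)
            (fun a => ∃ b : Fin 2, emp k a p b = 1)
          = 2 * (1 / 2 : ℝ) ^ k
        ∧ (1 / Real.sqrt n : ℝ) ≤ 2 * (1 / 2 : ℝ) ^ k)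
    ∧ (∀ a : Fin k → (Fin n × Bool) → Fin 2,
        (∃ (p : Fin n × Bool) (b : Fin 2), emp k a p b = 1) →
        ¬ IsCCE (mpGame n) (prodProb (emp k a)) (1 / 4)) := by
  have hk : k ≠ 0 := by omega
  have hpure_prob_ge : 1 / √n ≤ 2 * (1 / 2 : ℝ) ^ k := by
    have hsqrt := two_pow_le_sqrt (by exact_mod_cast hn) hk2
    rw [one_div_pow, mul_one_div, le_div_iff₀ (by positivity), div_mul_eq_mul_div,
      div_le_iff₀ (by positivity)]
    linarith [Real.sqrt_nonneg n]
  have hnot_cce : ∀ a : Fin k → (Fin n × Bool) → Fin 2,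
      (∃ (p : Fin n × Bool) (b : Fin 2), emp k a p b = 1) →
        ¬ IsCCE (mpGame n) (prodProb (emp k a)) (1 / 4) := fun a ⟨p, b, hb⟩ =>
    not_isCCE_mpGame_of_eq_one _ (emp_nonneg a) (sum_emp hk a) hb
  refine ⟨?_, fun p => ⟨PrProd_half_emp_pure hk p, hpure_prob_ge⟩, hnot_cce⟩
  have hpure_prob_le : 2 * (1 / 2 : ℝ) ^ k ≤ 1 := by
    have := pow_le_pow_of_le_one (by norm_num : (0 : ℝ) ≤ 1 / 2) (by norm_num) hk1
    linarith [pow_one (1 / 2 : ℝ)]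
  calc _ ≤ PrProd k (fun (_ : Fin n × Bool) (_ : Fin 2) => (1 : ℝ) / 2)
          (fun a => ∀ p, ¬∃ b, emp k a p b = 1) :=
        PrProd_mono k (fun _ _ => by norm_num) fun a hcce p hp => hnot_cce a ⟨p, hp⟩ hcce
    _ = (1 - 2 * (1 / 2) ^ k) ^ (2 * n) := by
        rw [PrProd_half_forall_not_emp_pure hk]
        simp [mul_comm]
    _ ≤ (1 - 1 / √n) ^ (2 * n) := pow_le_pow_left₀ (by linarith) (by linarith) _
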